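/- Conversely, let x* ∈ ℝ₊^n with Σ_i x*_i = M and p* ∈ ℝ^n satisfy: x*_i > 0 implies p*_i = max_{1≤j≤n} p*_j. Then with θ = x*, x* is a fixed point of the KLD-RL dynamics ẋ_i = M x*_i exp(η⁻¹p*_i)/(Σ_l x*_l exp(η⁻¹p*_l)) − x_i, for every η > 0. -/
import Mathlib


/-- conversely, if every strategy in the support of x* attains the maximal
payoff, then x* is a fixed point of the KLD-RL dynamics with θ = x*, for every η > 0. -/
theorem stmt_8 {n : ℕ} (M : ℝ) (hM : 0 < M)
    (xs ps : Fin n → ℝ) (hxs : ∀ i, 0 ≤ xs i) (hsum : ∑ i, xs i = M)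
    (hmax : ∀ i, 0 < xs i → ∀ j, ps j ≤ ps i) :
    ∀ η : ℝ, 0 < η → ∀ i,
      xs i = M * xs i * Real.exp (η⁻¹ * ps i) / (∑ l, xs l * Real.exp (η⁻¹ * ps l)) := by
  intro η hη i
  rcases eq_or_lt_of_le (hxs i) with h0 | hpos
  · rw [← h0]; simp
  · have hterm : ∀ l, xs l * Real.exp (η⁻¹ * ps l) = xs l * Real.exp (η⁻¹ * ps i) := by
      intro l
      rcases eq_or_lt_of_le (hxs l) with h0 | hposl
      · rw [← h0]; simp
      · have : ps l = ps i := le_antisymm (hmax i hpos l) (hmax l hposl i)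
        rw [this]
    have hsum' : (∑ l, xs l * Real.exp (η⁻¹ * ps l)) = M * Real.exp (η⁻¹ * ps i) := by
      simp_rw [hterm, ← Finset.sum_mul, hsum]
    rw [hsum']
    have he : Real.exp (η⁻¹ * ps i) ≠ 0 := Real.exp_ne_zero _
    field_simp
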